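/- Let d ≥ 1 and let ξ₁, ξ₂, …, ξ_d ∈ 𝔽_q \ {0, 1} be pairwise distinct. Then the number of ordered pairs (g, h) ∈ GL_d(𝔽_q) × GL_d(𝔽_q) such that g is conjugate to diag(ξ₁, 1, …, 1), h is conjugate to diag(ξ₂, …, ξ_d, 1), and g·h = diag(ξ₁, ξ₂, …, ξ_d), equals (2q − 1)^{d−1}. (This is the structure constant a^{λ∪μ}_{λμ} for λ = (1)_{t−ξ₁} and μ = (1)_{t−ξ₂} ∪ ⋯ ∪ (1)_{t−ξ_d}, in the case that 1 is not among the ξ_i.) -/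

import Mathlib

/-!
Write `D = diag(ξ₁, …, ξ_d)`. Conjugates of `diag(ξ₁, 1, …, 1)` are exactly the matrices
`g = 1 + v wᵀ` with `w ⬝ v = ξ₁ - 1`. As `ξ₂, …, ξ_d, 1` are distinct, `h = g⁻¹ D` is conjugate to
`diag(ξ₂, …, ξ_d, 1)` iff each of these values is an eigenvalue of `h`, i.e. a root of
`λ ↦ det (λ g - D)`. For `λ = ξ_k` (`k ≥ 2`) this happens iff `v_k w_k = 0`: then `e_k` is a left or
right null vector, and conversely a null vector forces it. Once all these hold, `λ = 1` is a root as
well. Normalising `v₁ = 1`, `w₁ = ξ₁ - 1`, the pairs `(g, h)` thus correspond bijectively to the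
tuples `((v_k, w_k))_{k ≥ 2}` with `v_k w_k = 0`, and there are `2q - 1` such pairs for each `k`.
-/

theorem isConj_iff_exists_units_conj {M : Type*} [Monoid M] {a b : M} :
    IsConj a b ↔ ∃ c : Mˣ, (c : M) * a * ((c⁻¹ : Mˣ) : M) = b := by
  refine ⟨fun ⟨c, hc⟩ => ⟨c, ?_⟩, fun ⟨c, hc⟩ => ⟨c, ?_⟩⟩
  · rw [hc.eq, mul_assoc, Units.mul_inv, mul_one]
  · rw [SemiconjBy, ← hc, mul_assoc, mul_assoc, Units.inv_mul, mul_one]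

theorem Nat.card_setOf_mul_eq {G : Type*} [Group G] (P Q : G → Prop) (d : G) :
    Nat.card {gh : G × G | P gh.1 ∧ Q gh.2 ∧ gh.1 * gh.2 = d} =
      Nat.card {g : G | P g ∧ Q (g⁻¹ * d)} :=
  Nat.card_congr
    { toFun := fun gh => ⟨gh.1.1, gh.2.1, by rw [← eq_inv_mul_of_mul_eq gh.2.2.2]; exact gh.2.2.1⟩
      invFun := fun g => ⟨(g.1, g.1⁻¹ * d), g.2.1, g.2.2, mul_inv_cancel_left _ _⟩
      left_inv := fun gh => Subtype.ext (Prod.ext rfl (eq_inv_mul_of_mul_eq gh.2.2.2).symm)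
      right_inv := fun _ => rfl }

theorem Nat.card_subtype_mul_eq_zero {R : Type*} [MulZeroClass R] [NoZeroDivisors R] [Fintype R]
    [DecidableEq R] : Nat.card {p : R × R // p.1 * p.2 = 0} = 2 * Nat.card R - 1 := by
  set A : Finset (R × R) := {0} ×ˢ Finset.univ
  set B : Finset (R × R) := Finset.univ ×ˢ {0}
  have hunion : (Finset.univ.filter fun p : R × R => p.1 * p.2 = 0) = A ∪ B := by
    ext ⟨a, b⟩; simp [A, B, eq_comm]
  have hinter : A ∩ B = {(0, 0)} := by
    ext ⟨a, b⟩; simp [A, B, and_comm, eq_comm]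
  have hcard := Finset.card_union_add_card_inter A B
  rw [hinter, Finset.card_singleton, Finset.card_product, Finset.card_product,
    Finset.card_singleton, Finset.card_univ] at hcard
  rw [Nat.card_eq_fintype_card, Fintype.card_subtype, hunion, Nat.card_eq_fintype_card]
  omega

namespace Matrix

variable {n : Type*} [Fintype n] [DecidableEq n]

section CommRing

variable {R : Type*} [CommRing R]

theorem units_conj_one_add_vecMulVec (c : (Matrix n n R)ˣ) (x y : n → R) :
    (c : Matrix n n R) * (1 + vecMulVec x y) * ((c⁻¹ : (Matrix n n R)ˣ) : Matrix n n R) =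
      1 + vecMulVec (c *ᵥ x) (y ᵥ* ((c⁻¹ : (Matrix n n R)ˣ) : Matrix n n R)) := by
  rw [mul_add, mul_one, add_mul, Units.mul_inv, mul_vecMulVec, vecMulVec_mul]

theorem isUnit_one_add_vecMulVec_iff (x y : n → R) :
    IsUnit (1 + vecMulVec x y) ↔ IsUnit (1 + y ⬝ᵥ x) := by
  rw [isUnit_iff_isUnit_det, vecMulVec_eq Unit, det_one_add_replicateCol_mul_replicateRow]

theorem IsConj.exists_eq_one_add_vecMulVec {A : Matrix n n R} {x y : n → R}
    (h : IsConj A (1 + vecMulVec x y)) :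
    ∃ v w, A = 1 + vecMulVec v w ∧ w ⬝ᵥ v = y ⬝ᵥ x := by
  obtain ⟨c, hc⟩ := isConj_iff_exists_units_conj.mp h.symm
  refine ⟨c *ᵥ x, y ᵥ* ↑(c⁻¹), by rw [← hc, units_conj_one_add_vecMulVec], ?_⟩
  rw [← dotProduct_mulVec, mulVec_mulVec, Units.inv_mul, one_mulVec]

theorem isConj_one_add_vecMulVec_mulVec {V : Matrix n n R} (hV : IsUnit V) (x y : n → R) :
    IsConj (1 + vecMulVec (V *ᵥ x) y) (1 + vecMulVec x (y ᵥ* V)) := by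
  obtain ⟨U, rfl⟩ := hV
  refine isConj_iff_exists_units_conj.mpr ⟨U⁻¹, ?_⟩
  rw [units_conj_one_add_vecMulVec, inv_inv, mulVec_mulVec, Units.inv_mul, one_mulVec]

end CommRing

variable {K : Type*} [Field K]

theorem isConj_diagonal_iff_range_subset_spectrum {A : Matrix n n K} {b : n → K}
    (hb : Function.Injective b) : IsConj A (diagonal b) ↔ Set.range b ⊆ spectrum K A := by
  constructor
  · intro hA
    obtain ⟨c, hc⟩ := isConj_iff_exists_units_conj.mp hA
    rw [← spectrum_diagonal, ← hc, spectrum.units_conjugate]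
  · intro hspec
    have hev (i : n) : Module.End.HasEigenvalue (toLin' A) (b i) := by
      rw [Module.End.hasEigenvalue_iff_mem_spectrum, spectrum_toLin']
      exact hspec ⟨i, rfl⟩
    choose u hu using fun i => (hev i).exists_hasEigenvector
    have hP : IsUnit (of u)ᵀ := by
      rw [isUnit_transpose, ← linearIndependent_rows_iff_isUnit]
      exact Module.End.eigenvectors_linearIndependent' _ b hb u hu
    refine isConj_comm.mp ⟨hP.unit, ?_⟩
    ext j i
    have := congrFun ((hu i).apply_eq_smul) j
    rw [toLin'_apply, mulVec, dotProduct] at this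
    rw [IsUnit.unit_spec, mul_diagonal, mul_apply]
    simp only [transpose_apply, of_apply, this, Pi.smul_apply, smul_eq_mul, mul_comm]

theorem mem_spectrum_units_inv_mul_iff (g : (Matrix n n K)ˣ) (D : Matrix n n K) (μ : K) :
    μ ∈ spectrum K (((g⁻¹ : (Matrix n n K)ˣ) : Matrix n n K) * D) ↔
      (μ • (g : Matrix n n K) - D).det = 0 := by
  have : algebraMap K (Matrix n n K) μ - ((g⁻¹ : (Matrix n n K)ˣ) : Matrix n n K) * D =
      ((g⁻¹ : (Matrix n n K)ˣ) : Matrix n n K) * (μ • (g : Matrix n n K) - D) := by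
    rw [mul_sub, mul_smul_comm, Units.inv_mul, Algebra.algebraMap_eq_smul_one]
  rw [spectrum.mem_iff, this, Units.isUnit_units_mul, isUnit_iff_isUnit_det, isUnit_iff_ne_zero,
    not_not]

theorem isConj_one_add_vecMulVec_single {v w : n → K} {i : n} (hv : v i ≠ 0)
    (hwv : w ⬝ᵥ v ≠ 0) :
    IsConj (1 + vecMulVec v w) (1 + vecMulVec (Pi.single i (w ⬝ᵥ v)) (Pi.single i 1)) := by
  set e : n → K := Pi.single i 1
  have hee : e ⬝ᵥ e = 1 := by simp [e]
  set V₁ := 1 + vecMulVec (v - e) e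
  have hV₁ : IsUnit V₁ := by
    rw [isUnit_one_add_vecMulVec_iff]
    simpa [e, dotProduct_sub] using hv
  have hV₁e : V₁ *ᵥ e = v := by
    simp [V₁, add_mulVec, vecMulVec_mulVec, hee]
  set w₁ := w ᵥ* V₁
  have hw₁e : w₁ ⬝ᵥ e = w ⬝ᵥ v := by rw [← dotProduct_mulVec, hV₁e]
  set c := w ⬝ᵥ v
  set V₂ := 1 + vecMulVec e (e - c⁻¹ • w₁)
  have hde : (e - c⁻¹ • w₁) ⬝ᵥ e = 0 := by
    rw [sub_dotProduct, smul_dotProduct, hee, hw₁e, smul_eq_mul, inv_mul_cancel₀ hwv, sub_self]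
  have hV₂ : IsUnit V₂ := by
    rw [isUnit_one_add_vecMulVec_iff, hde, add_zero]
    exact isUnit_one
  have hV₂e : V₂ *ᵥ e = e := by
    simp [V₂, add_mulVec, vecMulVec_mulVec, hde]
  have hw₁V₂ : w₁ ᵥ* V₂ = c • e := by
    rw [vecMul_add, vecMul_one, vecMul_vecMulVec, hw₁e, smul_sub, smul_smul,
      mul_inv_cancel₀ hwv, one_smul, add_sub_cancel]
  have h₁ := isConj_one_add_vecMulVec_mulVec hV₁ e w
  have h₂ := isConj_one_add_vecMulVec_mulVec hV₂ e w₁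
  rw [hV₁e] at h₁
  rw [hV₂e, hw₁V₂] at h₂
  convert h₁.trans h₂ using 2
  ext j k
  simp only [e, vecMulVec_apply, Pi.single_apply, Pi.smul_apply, smul_eq_mul]
  grind

theorem det_smul_one_add_vecMulVec_sub_diagonal_eq_zero_iff {ξ : n → K}
    (hξ : Function.Injective ξ) {k : n} (hk : ξ k ≠ 0) (v w : n → K) :
    (ξ k • (1 + vecMulVec v w) - diagonal ξ).det = 0 ↔ v k * w k = 0 := by
  constructor
  · intro hdet
    obtain ⟨u, hu0, hu⟩ := exists_mulVec_eq_zero_iff.mpr hdet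
    have hcomp (j : n) : (ξ j - ξ k) * u j = ξ k * (w ⬝ᵥ u) * v j := by
      have := congrFun hu j
      simp only [sub_mulVec, smul_mulVec, add_mulVec, one_mulVec, vecMulVec_mulVec,
        mulVec_diagonal, Pi.sub_apply, Pi.smul_apply, Pi.add_apply, Pi.zero_apply,
        op_smul_eq_smul, smul_eq_mul] at this
      linear_combination -this
    have hvk : (w ⬝ᵥ u) * v k = 0 := by
      simpa [hk] using (hcomp k).symm
    rcases mul_eq_zero.mp hvk with hwu | hvk
    · have hu_eq : u = Pi.single k (u k) := by
        ext j
        rcases eq_or_ne j k with rfl | hj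
        · simp
        · have := hcomp j
          rw [hwu, mul_zero, zero_mul] at this
          simpa [hj, sub_eq_zero, hξ.ne hj] using this
      have huk : u k ≠ 0 := fun h => hu0 (by rw [hu_eq, h, Pi.single_zero])
      rw [hu_eq, dotProduct_single] at hwu
      simp [(mul_eq_zero.mp hwu).resolve_right huk]
    · simp [hvk]
  · intro hvw
    rcases mul_eq_zero.mp hvw with hvk | hwk
    · refine exists_vecMul_eq_zero_iff.mp ⟨Pi.single k 1, by simp, ?_⟩
      ext j
      rcases eq_or_ne j k with rfl | hj
      · simp [vecMulVec_apply, hvk]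
      · simp [vecMulVec_apply, hvk, hj.symm]
    · refine exists_mulVec_eq_zero_iff.mp ⟨Pi.single k 1, by simp, ?_⟩
      ext j
      rcases eq_or_ne j k with rfl | hj
      · simp [vecMulVec_apply, hwk]
      · simp [vecMulVec_apply, hwk, hj]

theorem det_one_add_vecMulVec_sub_diagonal_eq_zero {ξ : n → K} (hξ : ∀ i, ξ i ≠ 1)
    {v w : n → K} (hv : v ≠ 0) (hw : w ⬝ᵥ (fun j => v j / (ξ j - 1)) = 1) :
    (1 + vecMulVec v w - diagonal ξ).det = 0 := by
  refine exists_mulVec_eq_zero_iff.mp ⟨fun j => v j / (ξ j - 1), ?_, ?_⟩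
  · contrapose! hv
    ext j
    simpa [sub_eq_zero, hξ j] using congrFun hv j
  · ext j
    simp only [sub_mulVec, add_mulVec, one_mulVec, vecMulVec_mulVec, hw, mulVec_diagonal,
      Pi.sub_apply, Pi.add_apply, op_smul_eq_smul, one_smul, Pi.zero_apply]
    field_simp [sub_ne_zero.mpr (hξ j)]
    ring

end Matrix

open Matrix

theorem Fin.dite_succ_lt_eq_snoc_tail {α : Type*} {m : ℕ} (ξ : Fin (m + 1) → α) (x : α) :
    (fun i : Fin (m + 1) => if h : (i : ℕ) + 1 < m + 1 then ξ ⟨(i : ℕ) + 1, h⟩ else x) =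
      Fin.snoc (Fin.tail ξ) x := by
  funext i
  refine Fin.lastCases ?_ (fun j => ?_) i
  · simp
  · simp [Fin.tail, Fin.succ]

section FinSucc

variable {K : Type*} [Field K] {m : ℕ}

theorem diagonal_ite_val_eq_zero (x : K) :
    diagonal (fun i : Fin (m + 1) => if (i : ℕ) = 0 then x else 1) =
      1 + vecMulVec (Pi.single 0 (x - 1)) (Pi.single 0 1) := by
  ext i j
  simp only [diagonal_apply, Matrix.add_apply, one_apply, vecMulVec_apply, Pi.single_apply,
    ← Fin.val_eq_zero_iff]
  split_ifs <;> grind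

/-- Normal form of `1 + v wᵀ`: the scaling ambiguity of `v wᵀ` is removed by `v 0 = 1`,
`w 0 = c`. -/
def rankOneMatrix (c : K) (f : Fin m → {p : K × K // p.1 * p.2 = 0}) :
    Matrix (Fin (m + 1)) (Fin (m + 1)) K :=
  1 + vecMulVec (vecCons 1 fun i => (f i).1.1) (vecCons c fun i => (f i).1.2)

theorem cons_dotProduct_cons_of_mul_eq_zero (c : K) (f : Fin m → {p : K × K // p.1 * p.2 = 0}) :
    (vecCons c fun i => (f i).1.2) ⬝ᵥ (vecCons 1 fun i => (f i).1.1) = c := by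
  rw [cons_dotProduct_cons, mul_one, add_eq_left]
  exact Finset.sum_eq_zero fun i _ => by rw [mul_comm]; exact (f i).2

theorem rankOneMatrix_injective {c : K} (hc : c ≠ 0) :
    Function.Injective (rankOneMatrix (m := m) c) := by
  intro f f' h
  funext i
  apply Subtype.ext
  apply Prod.ext
  · simpa [rankOneMatrix, vecMulVec_apply, hc] using congrFun₂ h i.succ 0
  · simpa [rankOneMatrix, vecMulVec_apply] using congrFun₂ h 0 i.succ

theorem exists_rankOneMatrix_eq {c : K} (hc : c ≠ 0) {v w : Fin (m + 1) → K}
    (h0 : v 0 * w 0 = c) (hsucc : ∀ k : Fin m, v k.succ * w k.succ = 0) :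
    ∃ f, rankOneMatrix c f = 1 + vecMulVec v w := by
  refine ⟨fun k => ⟨(w 0 / c * v k.succ, v 0 * w k.succ), ?_⟩, ?_⟩
  · simp only
    linear_combination (w 0 / c * v 0) * hsucc k
  · have hv : (vecCons 1 fun k => w 0 / c * v k.succ) = (w 0 / c) • v := by
      ext i
      refine Fin.cases ?_ (fun k => ?_) i
      · simp only [cons_val_zero, Pi.smul_apply, smul_eq_mul]
        field_simp
        linear_combination -h0
      · simp
    have hw : (vecCons c fun k => v 0 * w k.succ) = v 0 • w := by
      ext i
      refine Fin.cases ?_ (fun k => ?_) i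
      · simp [h0]
      · simp
    rw [rankOneMatrix, hv, hw]
    ext i j
    simp only [Matrix.add_apply, vecMulVec_apply, Pi.smul_apply, smul_eq_mul]
    field_simp
    linear_combination v i * w j * h0

theorem dotProduct_eq_of_forall_succ {v w : Fin (m + 1) → K}
    (hsucc : ∀ k : Fin m, v k.succ * w k.succ = 0) : w ⬝ᵥ v = v 0 * w 0 := by
  rw [dotProduct, Fin.sum_univ_succ, mul_comm, add_eq_left]
  exact Finset.sum_eq_zero fun k _ => by rw [mul_comm]; exact hsucc k

theorem isConj_inv_mul_diagonal_snoc_iff {ξ : Fin (m + 1) → K} (hξ0 : ∀ i, ξ i ≠ 0)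
    (hξ1 : ∀ i, ξ i ≠ 1) (hξ : Function.Injective ξ) (g : GL (Fin (m + 1)) K)
    {v w : Fin (m + 1) → K} (hg : (g : Matrix (Fin (m + 1)) (Fin (m + 1)) K) = 1 + vecMulVec v w)
    (hwv : w ⬝ᵥ v = ξ 0 - 1) :
    IsConj (((g⁻¹ : GL (Fin (m + 1)) K) : Matrix (Fin (m + 1)) (Fin (m + 1)) K) * diagonal ξ)
        (diagonal (Fin.snoc (Fin.tail ξ) 1)) ↔
      ∀ k : Fin m, v k.succ * w k.succ = 0 := by
  have hb : Function.Injective (Fin.snoc (Fin.tail ξ) (1 : K)) :=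
    Fin.snoc_injective_iff.mpr ⟨hξ.comp (Fin.succ_injective _), fun ⟨k, hk⟩ => hξ1 _ hk⟩
  rw [isConj_diagonal_iff_range_subset_spectrum hb, Fin.range_snoc, Set.insert_subset_iff,
    Set.range_subset_iff]
  simp only [Fin.tail, mem_spectrum_units_inv_mul_iff, hg, one_smul,
    det_smul_one_add_vecMulVec_sub_diagonal_eq_zero_iff hξ (hξ0 _)]
  refine ⟨fun h => h.2, fun h => ⟨?_, h⟩⟩
  have h0 : v 0 * w 0 = ξ 0 - 1 := (dotProduct_eq_of_forall_succ h).symm.trans hwv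
  have hc : ξ 0 - 1 ≠ 0 := sub_ne_zero.mpr (hξ1 0)
  refine det_one_add_vecMulVec_sub_diagonal_eq_zero hξ1 ?_ ?_
  · rintro rfl
    exact hc (by simpa using h0.symm)
  · rw [dotProduct, Fin.sum_univ_succ, Finset.sum_eq_zero fun k _ => by
      rw [mul_div_assoc', mul_comm, h k, zero_div]]
    field_simp
    linear_combination h0

theorem isConj_and_isConj_inv_mul_diagonal_iff {ξ : Fin (m + 1) → K} (hξ0 : ∀ i, ξ i ≠ 0)
    (hξ1 : ∀ i, ξ i ≠ 1) (hξ : Function.Injective ξ) (g : GL (Fin (m + 1)) K) :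
    (IsConj (g : Matrix (Fin (m + 1)) (Fin (m + 1)) K)
        (1 + vecMulVec (Pi.single 0 (ξ 0 - 1)) (Pi.single 0 1)) ∧
      IsConj (((g⁻¹ : GL (Fin (m + 1)) K) : Matrix (Fin (m + 1)) (Fin (m + 1)) K) * diagonal ξ)
        (diagonal (Fin.snoc (Fin.tail ξ) 1))) ↔
      ∃ f, rankOneMatrix (ξ 0 - 1) f = (g : Matrix (Fin (m + 1)) (Fin (m + 1)) K) := by
  have hc : ξ 0 - 1 ≠ 0 := sub_ne_zero.mpr (hξ1 0)
  constructor
  · rintro ⟨ha, hb⟩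
    obtain ⟨v, w, hg, hwv⟩ := ha.exists_eq_one_add_vecMulVec
    rw [single_dotProduct, Pi.single_eq_same, one_mul] at hwv
    have hsucc := (isConj_inv_mul_diagonal_snoc_iff hξ0 hξ1 hξ g hg hwv).mp hb
    rw [hg]
    exact exists_rankOneMatrix_eq hc ((dotProduct_eq_of_forall_succ hsucc).symm.trans hwv) hsucc
  · rintro ⟨f, hf⟩
    have hwv := cons_dotProduct_cons_of_mul_eq_zero (ξ 0 - 1) f
    refine ⟨?_, (isConj_inv_mul_diagonal_snoc_iff hξ0 hξ1 hξ g hf.symm hwv).mpr fun k => (f k).2⟩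
    have := isConj_one_add_vecMulVec_single (i := 0) (by simp) (hwv ▸ hc)
    rwa [hwv, ← rankOneMatrix, hf] at this

theorem card_setOf_isConj_and_isConj_inv_mul_diagonal {ξ : Fin (m + 1) → K}
    (hξ0 : ∀ i, ξ i ≠ 0) (hξ1 : ∀ i, ξ i ≠ 1) (hξ : Function.Injective ξ) :
    Nat.card {g : GL (Fin (m + 1)) K |
      IsConj (g : Matrix (Fin (m + 1)) (Fin (m + 1)) K)
        (1 + vecMulVec (Pi.single 0 (ξ 0 - 1)) (Pi.single 0 1)) ∧
      IsConj (((g⁻¹ : GL (Fin (m + 1)) K) : Matrix (Fin (m + 1)) (Fin (m + 1)) K) * diagonal ξ)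
        (diagonal (Fin.snoc (Fin.tail ξ) 1))} =
      Nat.card {p : K × K // p.1 * p.2 = 0} ^ m := by
  have hunit (f : Fin m → {p : K × K // p.1 * p.2 = 0}) : IsUnit (rankOneMatrix (ξ 0 - 1) f) := by
    rw [rankOneMatrix, isUnit_one_add_vecMulVec_iff, cons_dotProduct_cons_of_mul_eq_zero,
      add_sub_cancel]
    exact (hξ0 0).isUnit
  simp_rw [isConj_and_isConj_inv_mul_diagonal_iff hξ0 hξ1 hξ]
  have hrange : {g : GL (Fin (m + 1)) K |
      ∃ f, rankOneMatrix (ξ 0 - 1) f = (g : Matrix (Fin (m + 1)) (Fin (m + 1)) K)} =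
      Set.range fun f => (hunit f).unit := by
    ext g
    simp [Units.ext_iff]
  have hinj : Function.Injective fun f => (hunit f).unit := fun f f' h =>
    rankOneMatrix_injective (sub_ne_zero.mpr (hξ1 0)) (by simpa using congrArg Units.val h)
  rw [hrange, Nat.card_range_of_injective hinj, Nat.card_fun, Nat.card_fin]

end FinSucc

variable {F : Type*} [Field F] [Fintype F] [DecidableEq F]

/-- Let `ξ₁, …, ξ_d ∈ 𝔽_q \ {0, 1}` be pairwise distinct. The number of pairs
`(g, h)` in `GL_d(𝔽_q)` with `g ∼ diag(ξ₁, 1, …, 1)`,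
`h ∼ diag(ξ₂, …, ξ_d, 1)` and `g·h = diag(ξ₁, …, ξ_d)` equals `(2q - 1)^{d-1}`. -/
theorem structure_constant_union_distinct (q : ℕ) (hq : Fintype.card F = q)
    {d : ℕ} (hd : 1 ≤ d) (ξ : Fin d → F)
    (h0 : ∀ i, ξ i ≠ 0) (h1 : ∀ i, ξ i ≠ 1) (hinj : Function.Injective ξ) :
    Nat.card {gh : GL (Fin d) F × GL (Fin d) F |
      (∃ z : GL (Fin d) F,
        ((z * gh.1 * z⁻¹ : GL (Fin d) F) : Matrix (Fin d) (Fin d) F) =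
          Matrix.diagonal (fun i : Fin d => if (i : ℕ) = 0 then ξ ⟨0, hd⟩ else 1)) ∧
      (∃ z : GL (Fin d) F,
        ((z * gh.2 * z⁻¹ : GL (Fin d) F) : Matrix (Fin d) (Fin d) F) =
          Matrix.diagonal (fun i : Fin d =>
            if h : (i : ℕ) + 1 < d then ξ ⟨(i : ℕ) + 1, h⟩ else 1)) ∧
      ((gh.1 * gh.2 : GL (Fin d) F) : Matrix (Fin d) (Fin d) F) =
        Matrix.diagonal ξ} = (2 * q - 1) ^ (d - 1) := by
  obtain ⟨m, rfl⟩ : ∃ m, d = m + 1 := ⟨d - 1, by omega⟩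
  have hD : IsUnit (diagonal ξ) := isUnit_diagonal.mpr (Pi.isUnit_iff.mpr fun i => (h0 i).isUnit)
  rw [← hD.unit_spec, diagonal_ite_val_eq_zero, Fin.dite_succ_lt_eq_snoc_tail]
  simp only [Units.val_inj]
  simp only [Fin.zero_eta, Units.val_mul, ← isConj_iff_exists_units_conj]
  rw [Nat.card_setOf_mul_eq
    (fun g : GL (Fin (m + 1)) F => IsConj (g : Matrix (Fin (m + 1)) (Fin (m + 1)) F) _)
    (fun h : GL (Fin (m + 1)) F => IsConj (h : Matrix (Fin (m + 1)) (Fin (m + 1)) F) _)]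
  simp only [Units.val_mul, hD.unit_spec]
  rw [card_setOf_isConj_and_isConj_inv_mul_diagonal h0 h1 hinj, Nat.card_subtype_mul_eq_zero,
    Nat.card_eq_fintype_card, hq, Nat.add_sub_cancel]
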